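/- arXiv:1609.06060 — 4 statements merged into one kernel-verified Lean document; each statement's English description precedes it below -/
import Mathlib

section
/- Given a nontrivial X ∈ M_{m×n}(ℂ), the Lie subalgebra of 𝔲(n,m) generated by X̂ and îX is contained in the real span of { V̂_k, X̃_k, ĩX_k : k ≥ 1 }, where V̂_k = blockdiag(i(X*X)^k, -i(XX*)^k), X̃_k has off-diagonal blocks (X*X)^{k-1}X* and X(X*X)^{k-1}, and ĩX_k has off-diagonal blocks -i(X*X)^{k-1}X* and iX(X*X)^{k-1}; conversely this span is a Lie subalgebra containing X̂ and îX. -/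
/-!
Write `H = X̂` and `K = iΛ` with `Λ = blockdiag(-1, 1)`. Then `X̂ = H`, `îX = K H`, `X̃_k = H^(2k-1)`,
`ĩX_k = K H^(2k-1)` and `V̂_k = -K H^(2k)`. Since `K` anticommutes with `H` and `K² = -1`, we have
`H^a K = K (-H)^a`, so the bracket of two of the elements `H^a` (`a` odd) and `K H^a` (`a ≥ 1`)
is an integer multiple of another one. Hence their real span is closed under the bracket: it is
the Lie subalgebra they generate, and it contains `X̂` and `îX`.
-/

open Matrix

attribute [local instance 100] LieRing.ofAssociativeRing

open Submodule in
theorem LieSubalgebra.lie_mem_span_of_forall_lie_mem {R L : Type*} [CommRing R] [LieRing L]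
    [LieAlgebra R L] {s : Set L} (hs : ∀ x ∈ s, ∀ y ∈ s, ⁅x, y⁆ ∈ span R s) {x y : L}
    (hx : x ∈ span R s) (hy : y ∈ span R s) : ⁅x, y⁆ ∈ span R s := by
  induction hx, hy using span_induction₂ with
  | mem_mem x y hx hy => exact hs x hx y hy
  | zero_left y hy => simp
  | zero_right x hx => simp
  | add_left x y z _ _ _ hx hy => simpa only [add_lie] using add_mem hx hy
  | add_right x y z _ _ _ hx hy => simpa only [lie_add] using add_mem hx hy
  | smul_left r x y _ _ h => simpa only [smul_lie] using smul_mem _ r h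
  | smul_right r x y _ _ h => simpa only [lie_smul] using smul_mem _ r h

open Submodule in
theorem LieSubalgebra.coe_lieSpan_eq_span_of_forall_lie_mem {R L : Type*} [CommRing R]
    [LieRing L] [LieAlgebra R L] {s : Set L} (hs : ∀ x ∈ s, ∀ y ∈ s, ⁅x, y⁆ ∈ span R s) :
    lieSpan R L s = span R s := by
  refine le_antisymm ?_ submodule_span_le_lieSpan
  change _ ≤ ({ span R s with lie_mem' := lie_mem_span_of_forall_lie_mem hs } :
    LieSubalgebra R L)
  exact lieSpan_le.2 subset_span

section Anticommuting

variable {A : Type*} [Ring A] {H K : A}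

theorem pow_mul_eq_mul_neg_pow (hHK : H * K = -(K * H)) (a : ℕ) : H ^ a * K = K * (-H) ^ a :=
  ((show SemiconjBy K (-H) H by rw [SemiconjBy, mul_neg, hHK]).pow_right a).eq.symm

theorem lie_mul_pow_pow_of_odd (hHK : H * K = -(K * H)) (a : ℕ) {b : ℕ} (hb : Odd b) :
    ⁅K * H ^ a, H ^ b⁆ = 2 • (K * H ^ (a + b)) := by
  rw [Ring.lie_def, mul_assoc, ← pow_add, ← mul_assoc, pow_mul_eq_mul_neg_pow hHK, hb.neg_pow,
    mul_neg, neg_mul, mul_assoc, ← pow_add, add_comm b, sub_neg_eq_add, two_nsmul]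

theorem lie_mul_pow_mul_pow (hHK : H * K = -(K * H)) (hK : K * K = -1) (a b : ℕ) :
    ⁅K * H ^ a, K * H ^ b⁆ = (-H) ^ b * H ^ a - (-H) ^ a * H ^ b := by
  have mul_eq : ∀ a b : ℕ, K * H ^ a * (K * H ^ b) = -((-H) ^ a * H ^ b) := fun a b => by
    rw [mul_assoc, ← mul_assoc (H ^ a), pow_mul_eq_mul_neg_pow hHK, ← mul_assoc, ← mul_assoc, hK,
      neg_one_mul, neg_mul]
  rw [Ring.lie_def, mul_eq, mul_eq, neg_sub_neg]

def anticommPowers (H K : A) : Set A :=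
  {x | ∃ a, Odd a ∧ x = H ^ a} ∪ {x | ∃ a, 0 < a ∧ x = K * H ^ a}

variable (R : Type*) [Ring R] [Module R A]

theorem lie_mem_span_anticommPowers (hHK : H * K = -(K * H)) (hK : K * K = -1) {x y : A}
    (hx : x ∈ anticommPowers H K) (hy : y ∈ anticommPowers H K) :
    ⁅x, y⁆ ∈ Submodule.span R (anticommPowers H K) := by
  have pow_mem {a : ℕ} (ha : Odd a) : H ^ a ∈ Submodule.span R (anticommPowers H K) :=
    Submodule.subset_span (Or.inl ⟨a, ha, rfl⟩)
  have mul_pow_mem {a : ℕ} (ha : 0 < a) : K * H ^ a ∈ Submodule.span R (anticommPowers H K) :=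
    Submodule.subset_span (Or.inr ⟨a, ha, rfl⟩)
  rcases hx with ⟨a, ha, rfl⟩ | ⟨a, ha, rfl⟩ <;> rcases hy with ⟨b, hb, rfl⟩ | ⟨b, hb, rfl⟩
  · rw [(Commute.pow_pow_self H a b).lie_eq]
    exact zero_mem _
  · rw [← lie_skew, lie_mul_pow_pow_of_odd hHK b ha]
    exact neg_mem (nsmul_mem (mul_pow_mem (by omega)) 2)
  · rw [lie_mul_pow_pow_of_odd hHK a hb]
    exact nsmul_mem (mul_pow_mem (by omega)) 2
  · rw [lie_mul_pow_mul_pow hHK hK]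
    rcases Nat.even_or_odd a with ha' | ha' <;> rcases Nat.even_or_odd b with hb' | hb'
    · rw [ha'.neg_pow, hb'.neg_pow, ← pow_add, ← pow_add, add_comm, sub_self]
      exact zero_mem _
    · rw [ha'.neg_pow, hb'.neg_pow, neg_mul, ← pow_add, ← pow_add, add_comm b, ← neg_add',
        ← two_nsmul]
      exact neg_mem (nsmul_mem (pow_mem (ha'.add_odd hb')) 2)
    · rw [ha'.neg_pow, hb'.neg_pow, neg_mul, ← pow_add, ← pow_add, add_comm b, sub_neg_eq_add,
        ← two_nsmul]
      exact nsmul_mem (pow_mem (ha'.add_even hb')) 2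
    · rw [ha'.neg_pow, hb'.neg_pow, neg_mul, neg_mul, ← pow_add, ← pow_add, add_comm, sub_self]
      exact zero_mem _

theorem span_anticommPowers_eq {V Xt iXt : ℕ → A} (hV : ∀ k, V k = -(K * H ^ (2 * k)))
    (hXt : ∀ k, Xt (k + 1) = H ^ (2 * k + 1)) (hiXt : ∀ k, iXt (k + 1) = K * H ^ (2 * k + 1)) :
    Submodule.span R (anticommPowers H K) =
      Submodule.span R {M | ∃ k, 1 ≤ k ∧ (M = V k ∨ M = Xt k ∨ M = iXt k)} := by
  apply Submodule.span_eq_span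
  · rintro _ (⟨a, ⟨k, rfl⟩, rfl⟩ | ⟨a, ha, rfl⟩)
    · exact Submodule.subset_span ⟨k + 1, by omega, Or.inr (Or.inl (hXt k).symm)⟩
    obtain ⟨k, rfl | rfl⟩ := Nat.even_or_odd' a
    · rw [← neg_neg (K * _), ← hV]
      exact neg_mem (Submodule.subset_span ⟨k, by omega, Or.inl rfl⟩)
    · exact Submodule.subset_span ⟨k + 1, by omega, Or.inr (Or.inr (hiXt k).symm)⟩
  · rintro _ ⟨k, hk, rfl | rfl | rfl⟩
    · rw [hV]
      exact neg_mem (Submodule.subset_span (Or.inr ⟨2 * k, by omega, rfl⟩))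
    all_goals obtain ⟨k, rfl⟩ := Nat.exists_eq_add_of_le' hk
    · rw [hXt]
      exact Submodule.subset_span (Or.inl ⟨2 * k + 1, odd_two_mul_add_one k, rfl⟩)
    · rw [hiXt]
      exact Submodule.subset_span (Or.inr ⟨2 * k + 1, by omega, rfl⟩)

theorem coe_lieSpan_anticommPowers (R : Type*) [CommRing R] [Algebra R A] (hHK : H * K = -(K * H)) (hK : K * K = -1) :
    LieSubalgebra.lieSpan R A (anticommPowers H K) = Submodule.span R (anticommPowers H K) :=
  LieSubalgebra.coe_lieSpan_eq_span_of_forall_lie_mem fun _ hx _ hy =>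
    lie_mem_span_anticommPowers R hHK hK hx hy

end Anticommuting

namespace Matrix

variable {α : Type*} [Ring α] {m n : Type*} [Fintype m] [Fintype n] [DecidableEq m]
  [DecidableEq n] (Y : Matrix n m α) (X : Matrix m n α)

theorem mul_pow_mul (k : ℕ) : (Y * X) ^ k * Y = Y * (X * Y) ^ k := by
  induction k with
  | zero => simp
  | succ k ih => rw [pow_succ, Matrix.mul_assoc, Matrix.mul_assoc Y, ← Matrix.mul_assoc _ Y, ih,
      Matrix.mul_assoc, ← pow_succ]

theorem fromBlocks_antidiag_pow_two_mul (k : ℕ) :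
    fromBlocks 0 Y X 0 ^ (2 * k) = fromBlocks ((Y * X) ^ k) 0 0 ((X * Y) ^ k) := by
  rw [pow_mul, sq, fromBlocks_multiply]
  simp [fromBlocks_diagonal_pow]

theorem fromBlocks_antidiag_pow_two_mul_add_one (k : ℕ) :
    fromBlocks 0 Y X 0 ^ (2 * k + 1) = fromBlocks 0 ((Y * X) ^ k * Y) (X * (Y * X) ^ k) 0 := by
  rw [pow_succ', fromBlocks_antidiag_pow_two_mul, fromBlocks_multiply, mul_pow_mul]
  simp

theorem fromBlocks_antidiag_mul_fromBlocks_neg_one_one :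
    fromBlocks 0 Y X 0 * fromBlocks (-1) 0 0 1 =
      -(fromBlocks (-1) 0 0 1 * fromBlocks 0 Y X 0) := by
  simp [fromBlocks_multiply, fromBlocks_neg]

end Matrix

theorem stmt_4_general {m n : ℕ} (X : Matrix (Fin m) (Fin n) ℂ)
    (Xhat iXhat : Matrix (Fin n ⊕ Fin m) (Fin n ⊕ Fin m) ℂ)
    (hXhat : Xhat = Matrix.fromBlocks 0 Xᴴ X 0)
    (hiXhat : iXhat = Matrix.fromBlocks 0 (-(Complex.I • Xᴴ)) (Complex.I • X) 0)
    (V Xt iXt : ℕ → Matrix (Fin n ⊕ Fin m) (Fin n ⊕ Fin m) ℂ)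
    (hV : ∀ k, V k = Matrix.fromBlocks
      (Complex.I • (Xᴴ * X) ^ k) 0 0 (-(Complex.I • (X * Xᴴ) ^ k)))
    (hXt : ∀ k, Xt k = Matrix.fromBlocks 0 ((Xᴴ * X) ^ (k - 1) * Xᴴ)
      (X * (Xᴴ * X) ^ (k - 1)) 0)
    (hiXt : ∀ k, iXt k = Matrix.fromBlocks 0 (-(Complex.I • ((Xᴴ * X) ^ (k - 1) * Xᴴ)))
      (Complex.I • (X * (Xᴴ * X) ^ (k - 1))) 0) :
    ∃ L : LieSubalgebra ℝ (Matrix (Fin n ⊕ Fin m) (Fin n ⊕ Fin m) ℂ),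
      (L : Submodule ℝ (Matrix (Fin n ⊕ Fin m) (Fin n ⊕ Fin m) ℂ)) =
        Submodule.span ℝ
          {M | ∃ k : ℕ, 1 ≤ k ∧ (M = V k ∨ M = Xt k ∨ M = iXt k)} ∧
      Xhat ∈ L ∧ iXhat ∈ L ∧
      LieSubalgebra.lieSpan ℝ (Matrix (Fin n ⊕ Fin m) (Fin n ⊕ Fin m) ℂ)
        {Xhat, iXhat} ≤ L := by
  set H : Matrix (Fin n ⊕ Fin m) (Fin n ⊕ Fin m) ℂ := fromBlocks 0 Xᴴ X 0
  set K : Matrix (Fin n ⊕ Fin m) (Fin n ⊕ Fin m) ℂ := Complex.I • fromBlocks (-1) 0 0 1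
  have hHK : H * K = -(K * H) := by
    rw [mul_smul_comm, smul_mul_assoc, fromBlocks_antidiag_mul_fromBlocks_neg_one_one, smul_neg]
  have hK : K * K = -1 := by
    rw [smul_mul_smul_comm, Complex.I_mul_I, fromBlocks_multiply]
    simp
  have hV' (k : ℕ) : V k = -(K * H ^ (2 * k)) := by
    rw [hV, fromBlocks_antidiag_pow_two_mul, smul_mul_assoc, fromBlocks_multiply]
    simp [fromBlocks_smul, fromBlocks_neg]
  have hXt' (k : ℕ) : Xt (k + 1) = H ^ (2 * k + 1) := by
    rw [hXt, fromBlocks_antidiag_pow_two_mul_add_one, Nat.add_sub_cancel]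
  have hiXt' (k : ℕ) : iXt (k + 1) = K * H ^ (2 * k + 1) := by
    rw [hiXt, fromBlocks_antidiag_pow_two_mul_add_one, Nat.add_sub_cancel, smul_mul_assoc,
      fromBlocks_multiply]
    simp [fromBlocks_smul]
  have hXhat_mem : Xhat ∈ anticommPowers H K := Or.inl ⟨1, odd_one, by rw [hXhat, pow_one]⟩
  have hiXhat_mem : iXhat ∈ anticommPowers H K := Or.inr ⟨1, one_pos, by
    rw [hiXhat, pow_one, smul_mul_assoc, fromBlocks_multiply]
    simp [fromBlocks_smul]⟩
  refine ⟨LieSubalgebra.lieSpan ℝ _ (anticommPowers H K), ?_,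
    LieSubalgebra.subset_lieSpan hXhat_mem, LieSubalgebra.subset_lieSpan hiXhat_mem,
    LieSubalgebra.lieSpan_mono (Set.pair_subset hXhat_mem hiXhat_mem)⟩
  rw [coe_lieSpan_anticommPowers ℝ hHK hK, span_anticommPowers_eq ℝ hV' hXt' hiXt']

theorem stmt_4 {m n : ℕ} (X : Matrix (Fin m) (Fin n) ℂ) (hX : X ≠ 0)
    (Xhat iXhat : Matrix (Fin n ⊕ Fin m) (Fin n ⊕ Fin m) ℂ)
    (hXhat : Xhat = Matrix.fromBlocks 0 Xᴴ X 0)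
    (hiXhat : iXhat = Matrix.fromBlocks 0 (-(Complex.I • Xᴴ)) (Complex.I • X) 0)
    (V Xt iXt : ℕ → Matrix (Fin n ⊕ Fin m) (Fin n ⊕ Fin m) ℂ)
    (hV : ∀ k, V k = Matrix.fromBlocks
      (Complex.I • (Xᴴ * X) ^ k) 0 0 (-(Complex.I • (X * Xᴴ) ^ k)))
    (hXt : ∀ k, Xt k = Matrix.fromBlocks 0 ((Xᴴ * X) ^ (k - 1) * Xᴴ)
      (X * (Xᴴ * X) ^ (k - 1)) 0)
    (hiXt : ∀ k, iXt k = Matrix.fromBlocks 0 (-(Complex.I • ((Xᴴ * X) ^ (k - 1) * Xᴴ)))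
      (Complex.I • (X * (Xᴴ * X) ^ (k - 1))) 0) :
    ∃ L : LieSubalgebra ℝ (Matrix (Fin n ⊕ Fin m) (Fin n ⊕ Fin m) ℂ),
      (L : Submodule ℝ (Matrix (Fin n ⊕ Fin m) (Fin n ⊕ Fin m) ℂ)) =
        Submodule.span ℝ
          {M | ∃ k : ℕ, 1 ≤ k ∧ (M = V k ∨ M = Xt k ∨ M = iXt k)} ∧
      Xhat ∈ L ∧ iXhat ∈ L ∧
      LieSubalgebra.lieSpan ℝ (Matrix (Fin n ⊕ Fin m) (Fin n ⊕ Fin m) ℂ)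
        {Xhat, iXhat} ≤ L :=
  stmt_4_general X Xhat iXhat hXhat hiXhat V Xt iXt hV hXt hiXt
end

section
/- Let W ∈ M_{m×n}(ℂ), z = re^{iθ} ∈ ℂ, and ẑW the matrix in 𝔲(n,m) with top-right block z̄W* and bottom-left block zW. Then exp(ẑW) has top-left block Σ_{k≥0} r^{2k}/(2k)! (W*W)^k, top-right block e^{-iθ} Σ_{k≥0} r^{2k+1}/(2k+1)! (W*W)^k W*, bottom-left block e^{iθ} Σ_{k≥0} r^{2k+1}/(2k+1)! W(W*W)^k, and bottom-right block Σ_{k≥0} r^{2k}/(2k)! (WW*)^k. -/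
/-! Since `fromBlocks 0 B C 0 ^ 2 = fromBlocks (B * C) 0 0 (C * B)`, the even powers of an
off-diagonal block matrix are block diagonal and the odd ones are off-diagonal, so splitting the
exponential series into its even and odd parts computes `exp (fromBlocks 0 B C 0)` blockwise.
For `B = z̄ • Wᴴ` and `C = z • W` one has `B * C = |z|² • (Wᴴ * W)`, and the phases of `z̄` and
`z` factor out of the off-diagonal blocks. -/

open Matrix

theorem HasSum.matrix_submatrix {X l m n o R : Type*} [AddCommMonoid R] [TopologicalSpace R]
    {L : SummationFilter X} {f : X → Matrix m n R} {a : Matrix m n R} (hf : HasSum f a L)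
    (r : l → m) (c : o → n) : HasSum (fun x => (f x).submatrix r c) (a.submatrix r c) L :=
  Pi.hasSum.2 fun i => Pi.hasSum.2 fun j => Pi.hasSum.1 (Pi.hasSum.1 hf (r i)) (c j)

namespace Matrix

variable {X l m n o R : Type*}

theorem tsum_fromBlocks [AddCommMonoid R] [TopologicalSpace R] [T2Space R]
    {A : X → Matrix n l R} {B : X → Matrix n m R} {C : X → Matrix o l R} {D : X → Matrix o m R}
    (h : Summable fun x => fromBlocks (A x) (B x) (C x) (D x)) :
    ∑' x, fromBlocks (A x) (B x) (C x) (D x) =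
      fromBlocks (∑' x, A x) (∑' x, B x) (∑' x, C x) (∑' x, D x) := by
  rw [← fromBlocks_toBlocks (∑' x, fromBlocks (A x) (B x) (C x) (D x))]
  congr 1
  · exact (h.hasSum.matrix_submatrix Sum.inl Sum.inl).tsum_eq.symm
  · exact (h.hasSum.matrix_submatrix Sum.inl Sum.inr).tsum_eq.symm
  · exact (h.hasSum.matrix_submatrix Sum.inr Sum.inl).tsum_eq.symm
  · exact (h.hasSum.matrix_submatrix Sum.inr Sum.inr).tsum_eq.symm

theorem mul_pow_mul_s8 [Fintype m] [Fintype n] [DecidableEq m] [DecidableEq n] [Semiring R]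
    (B : Matrix m n R) (C : Matrix n m R) (k : ℕ) : (B * C) ^ k * B = B * (C * B) ^ k := by
  induction k with
  | zero => simp
  | succ k ih =>
    rw [pow_succ', Matrix.mul_assoc, ih, pow_succ', Matrix.mul_assoc, Matrix.mul_assoc]

variable [Fintype m] [Fintype n] [DecidableEq m] [DecidableEq n]

theorem fromBlocks_offDiag_pow_two_mul [Semiring R] (B : Matrix m n R) (C : Matrix n m R)
    (k : ℕ) : fromBlocks 0 B C 0 ^ (2 * k) = fromBlocks ((B * C) ^ k) 0 0 ((C * B) ^ k) := by
  rw [pow_mul, sq, fromBlocks_multiply, ← fromBlocks_diagonal_pow]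
  simp

theorem fromBlocks_offDiag_pow_two_mul_add_one [Semiring R] (B : Matrix m n R)
    (C : Matrix n m R) (k : ℕ) :
    fromBlocks 0 B C 0 ^ (2 * k + 1) = fromBlocks 0 ((B * C) ^ k * B) ((C * B) ^ k * C) 0 := by
  rw [pow_succ, fromBlocks_offDiag_pow_two_mul, fromBlocks_multiply]
  simp

theorem hasSum_exp_series {𝕂 : Type*} [RCLike 𝕂] (A : Matrix m m 𝕂) :
    HasSum (fun N : ℕ => (N.factorial : 𝕂)⁻¹ • A ^ N) (NormedSpace.exp A) := by
  open scoped Norms.Operator in exact NormedSpace.exp_series_hasSum_exp' (𝕂 := 𝕂) A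

theorem exp_fromBlocks_offDiag {𝕂 : Type*} [RCLike 𝕂] (B : Matrix m n 𝕂) (C : Matrix n m 𝕂) :
    NormedSpace.exp (fromBlocks 0 B C 0) =
      fromBlocks (∑' k, ((2 * k).factorial : 𝕂)⁻¹ • (B * C) ^ k)
        (∑' k, ((2 * k + 1).factorial : 𝕂)⁻¹ • ((B * C) ^ k * B))
        (∑' k, ((2 * k + 1).factorial : 𝕂)⁻¹ • ((C * B) ^ k * C))
        (∑' k, ((2 * k).factorial : 𝕂)⁻¹ • (C * B) ^ k) := by
  set f := fun N : ℕ => (N.factorial : 𝕂)⁻¹ • fromBlocks 0 B C 0 ^ N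
  have hf : HasSum f (NormedSpace.exp (fromBlocks 0 B C 0)) := hasSum_exp_series _
  have heven (k : ℕ) : f (2 * k) = fromBlocks (((2 * k).factorial : 𝕂)⁻¹ • (B * C) ^ k) 0 0
      (((2 * k).factorial : 𝕂)⁻¹ • (C * B) ^ k) := by
    simp only [f, fromBlocks_offDiag_pow_two_mul, fromBlocks_smul, smul_zero]
  have hodd (k : ℕ) : f (2 * k + 1) = fromBlocks 0
      (((2 * k + 1).factorial : 𝕂)⁻¹ • ((B * C) ^ k * B))
      (((2 * k + 1).factorial : 𝕂)⁻¹ • ((C * B) ^ k * C)) 0 := by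
    simp only [f, fromBlocks_offDiag_pow_two_mul_add_one, fromBlocks_smul, smul_zero]
  have hf_even : Summable fun k => f (2 * k) :=
    hf.summable.comp_injective (mul_right_injective₀ two_ne_zero)
  have hf_odd : Summable fun k => f (2 * k + 1) :=
    hf.summable.comp_injective fun a b h => by omega
  rw [← hf.tsum_eq, ← tsum_even_add_odd hf_even hf_odd]
  simp only [heven, hodd] at hf_even hf_odd ⊢
  rw [tsum_fromBlocks hf_even, tsum_fromBlocks hf_odd, fromBlocks_add]
  simp

end Matrix

theorem stmt_8_general {m n : ℕ} (W : Matrix (Fin m) (Fin n) ℂ) (r θ : ℝ)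
    (z : ℂ) (hz : z = (r : ℂ) * Complex.exp (θ * Complex.I)) :
    NormedSpace.exp (Matrix.fromBlocks 0 ((starRingEnd ℂ z) • Wᴴ) (z • W) 0) =
      Matrix.fromBlocks
        (∑' k : ℕ, ((r ^ (2 * k) / (Nat.factorial (2 * k)) : ℝ) : ℂ) • (Wᴴ * W) ^ k)
        (Complex.exp (-(θ * Complex.I)) •
          ∑' k : ℕ, ((r ^ (2 * k + 1) / (Nat.factorial (2 * k + 1)) : ℝ) : ℂ) •
            ((Wᴴ * W) ^ k * Wᴴ))
        (Complex.exp (θ * Complex.I) •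
          ∑' k : ℕ, ((r ^ (2 * k + 1) / (Nat.factorial (2 * k + 1)) : ℝ) : ℂ) •
            (W * (Wᴴ * W) ^ k))
        (∑' k : ℕ, ((r ^ (2 * k) / (Nat.factorial (2 * k)) : ℝ) : ℂ) • (W * Wᴴ) ^ k) := by
  have hconj : starRingEnd ℂ z = r * Complex.exp (-(θ * Complex.I)) := by
    rw [hz, map_mul, Complex.conj_ofReal, ← Complex.exp_conj, map_mul, Complex.conj_ofReal,
      Complex.conj_I, mul_neg]
  have hnorm : starRingEnd ℂ z * z = (r : ℂ) ^ 2 := by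
    rw [hconj, hz, mul_mul_mul_comm, ← Complex.exp_add, neg_add_cancel, Complex.exp_zero,
      mul_one, sq]
  rw [exp_fromBlocks_offDiag]
  simp only [Matrix.smul_mul, Matrix.mul_smul, smul_smul, mul_comm z, hnorm, smul_pow,
    ← tsum_const_smul'', Matrix.mul_pow_mul_s8 W Wᴴ]
  congr 1 <;> refine tsum_congr fun k => ?_ <;> congr 1
  · push_cast; ring
  · rw [hconj]; push_cast; ring
  · rw [hz]; push_cast; ring
  · push_cast; ring

theorem stmt_8 {m n : ℕ} (W : Matrix (Fin m) (Fin n) ℂ) (r θ : ℝ) (hr : 0 ≤ r)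
    (z : ℂ) (hz : z = (r : ℂ) * Complex.exp (θ * Complex.I)) :
    NormedSpace.exp (Matrix.fromBlocks 0 ((starRingEnd ℂ z) • Wᴴ) (z • W) 0) =
      Matrix.fromBlocks
        (∑' k : ℕ, ((r ^ (2 * k) / (Nat.factorial (2 * k)) : ℝ) : ℂ) • (Wᴴ * W) ^ k)
        (Complex.exp (-(θ * Complex.I)) •
          ∑' k : ℕ, ((r ^ (2 * k + 1) / (Nat.factorial (2 * k + 1)) : ℝ) : ℂ) •
            ((Wᴴ * W) ^ k * Wᴴ))
        (Complex.exp (θ * Complex.I) •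
          ∑' k : ℕ, ((r ^ (2 * k + 1) / (Nat.factorial (2 * k + 1)) : ℝ) : ℂ) •
            (W * (Wᴴ * W) ^ k))
        (∑' k : ℕ, ((r ^ (2 * k) / (Nat.factorial (2 * k)) : ℝ) : ℂ) • (W * Wᴴ) ^ k) :=
  stmt_8_general W r θ z hz
end

section
/- Let W ∈ M_{m×n}(ℂ) with singular value decomposition W = BΣA* (A ∈ U(n), B ∈ U(m), Σ the diagonal matrix of singular values σ_1 ≥ ... ≥ σ_a ≥ 0, a = min(n,m)). For z = re^{iθ}, exp(ẑW) = Ω M(z) Ω*, where Ω = blockdiag(A,B) and M(z) has blocks: top-left diag(cosh(σ_j r))_{j=1}^n, bottom-right diag(cosh(σ_j r))_{j=1}^m (with σ_j = 0 for j > a), and bottom-left block equal to e^{iθ} diag(sinh(σ_j r)) extended by zeros, top-right its conjugate transpose. -/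
/-!
Conjugating by the unitary `Ω = diag(A, B)` replaces `ẑW` by `ẑΣ`, whose blocks are rectangular
diagonal. Matrices with diagonal blocks `c` and off-diagonal blocks `a • s`, `b • s` (where
`a * b = 1` and `s` vanishes beyond `min m n`) multiply like split-complex numbers `c + ε s` with
`ε² = 1`, index by index. So the even powers of `ẑΣ` are diagonal with entries `(σⱼ r)^(2k)`, the
odd powers are off-diagonal with entries `e^{±iθ} (σⱼ r)^(2k+1)`, and splitting the exponential
series into its even and odd parts produces `cosh (σⱼ r)` and `sinh (σⱼ r)`.
-/

open Matrix

section RectDiagonal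

variable {R : Type*}

def rectDiagonal [Zero R] (a b : ℕ) (f : ℕ → R) : Matrix (Fin a) (Fin b) R :=
  of fun i j => if (i : ℕ) = j then f i else 0

@[simp]
lemma rectDiagonal_apply [Zero R] (a b : ℕ) (f : ℕ → R) (i : Fin a) (j : Fin b) :
    rectDiagonal a b f i j = if (i : ℕ) = j then f i else 0 := rfl

@[simp]
lemma rectDiagonal_zero [Zero R] (a b : ℕ) : rectDiagonal a b (0 : ℕ → R) = 0 := by
  ext i j
  simp

lemma rectDiagonal_self [Zero R] (a : ℕ) (f : ℕ → R) :
    rectDiagonal a a f = diagonal fun i : Fin a => f i := by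
  ext i j
  simp [diagonal_apply, Fin.val_inj]

lemma rectDiagonal_add [AddZeroClass R] (a b : ℕ) (f g : ℕ → R) :
    rectDiagonal a b f + rectDiagonal a b g = rectDiagonal a b (f + g) := by
  ext i j
  simp only [Matrix.add_apply, rectDiagonal_apply, Pi.add_apply]
  split_ifs <;> simp

lemma smul_rectDiagonal {S : Type*} [Zero R] [SMulZeroClass S R] (x : S) (a b : ℕ)
    (f : ℕ → R) : x • rectDiagonal a b f = rectDiagonal a b (x • f) := by
  ext i j
  simp only [Matrix.smul_apply, rectDiagonal_apply, Pi.smul_apply, smul_ite, smul_zero]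

lemma conjTranspose_rectDiagonal [AddMonoid R] [StarAddMonoid R] (a b : ℕ) (f : ℕ → R) :
    (rectDiagonal a b f)ᴴ = rectDiagonal b a (star f) := by
  ext j i
  simp only [conjTranspose_apply, rectDiagonal_apply, Pi.star_apply, eq_comm (a := (i : ℕ))]
  split_ifs with h <;> simp [h]

lemma rectDiagonal_mul_rectDiagonal [NonUnitalNonAssocSemiring R] {a b c : ℕ} (f g : ℕ → R)
    (h : ∀ j < min a c, b ≤ j → f j * g j = 0) :
    rectDiagonal a b f * rectDiagonal b c g = rectDiagonal a c (f * g) := by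
  ext i k
  simp only [mul_apply, rectDiagonal_apply, Pi.mul_apply, ite_mul, zero_mul]
  rcases lt_or_ge (i : ℕ) b with hib | hib
  · rw [Finset.sum_eq_single ⟨i, hib⟩ (fun j _ hj => if_neg fun hij => hj (Fin.ext hij.symm))
      (by simp)]
    simp
  · rw [Finset.sum_eq_zero fun j _ => if_neg (by omega)]
    split_ifs with hik
    · exact (h i (lt_min i.isLt (hik ▸ k.isLt)) hib).symm
    · rfl

lemma hasSum_rectDiagonal [AddCommMonoid R] [TopologicalSpace R] {ι : Type*} {a b : ℕ}
    {f : ι → ℕ → R} {g : ℕ → R} (h : HasSum f g) :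
    HasSum (fun k => rectDiagonal a b (f k)) (rectDiagonal a b g) := by
  refine Pi.hasSum.2 fun i => Pi.hasSum.2 fun j => ?_
  simp only [rectDiagonal_apply]
  split_ifs
  · exact Pi.hasSum.1 h i
  · exact hasSum_zero

end RectDiagonal

theorem HasSum.matrix_fromBlocks {R ι l m n o : Type*} [AddCommMonoid R] [TopologicalSpace R]
    {A : ι → Matrix n l R} {B : ι → Matrix n m R} {C : ι → Matrix o l R} {D : ι → Matrix o m R}
    {A' : Matrix n l R} {B' : Matrix n m R} {C' : Matrix o l R} {D' : Matrix o m R}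
    (hA : HasSum A A') (hB : HasSum B B') (hC : HasSum C C') (hD : HasSum D D') :
    HasSum (fun k => fromBlocks (A k) (B k) (C k) (D k)) (fromBlocks A' B' C' D') := by
  refine Pi.hasSum.2 fun i => Pi.hasSum.2 fun j => ?_
  rcases i with i | i <;> rcases j with j | j
  · exact Pi.hasSum.1 (Pi.hasSum.1 hA i) j
  · exact Pi.hasSum.1 (Pi.hasSum.1 hB i) j
  · exact Pi.hasSum.1 (Pi.hasSum.1 hC i) j
  · exact Pi.hasSum.1 (Pi.hasSum.1 hD i) j

section HyperbolicBlocks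

variable {K : Type*} [CommRing K] {n m : ℕ}

def hyperbolicBlocks (a b : K) (c s : ℕ → K) : Matrix (Fin n ⊕ Fin m) (Fin n ⊕ Fin m) K :=
  fromBlocks (rectDiagonal n n c) (a • rectDiagonal n m s) (b • rectDiagonal m n s)
    (rectDiagonal m m c)

lemma hyperbolicBlocks_add (a b : K) (c s c' s' : ℕ → K) :
    (hyperbolicBlocks a b c s + hyperbolicBlocks a b c' s' : Matrix (Fin n ⊕ Fin m) _ K) =
      hyperbolicBlocks a b (c + c') (s + s') := by
  simp only [hyperbolicBlocks, fromBlocks_add, ← smul_add, rectDiagonal_add]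

lemma smul_hyperbolicBlocks (x a b : K) (c s : ℕ → K) :
    (x • hyperbolicBlocks a b c s : Matrix (Fin n ⊕ Fin m) _ K) =
      hyperbolicBlocks a b (x • c) (x • s) := by
  simp only [hyperbolicBlocks, fromBlocks_smul, smul_rectDiagonal, smul_comm x]

lemma hyperbolicBlocks_mul (a b : K) (c s c' s' : ℕ → K) (hs : ∀ j, min n m ≤ j → s j = 0) :
    (hyperbolicBlocks a b c s * hyperbolicBlocks a b c' s' : Matrix (Fin n ⊕ Fin m) _ K) =
      hyperbolicBlocks a b (c * c' + (a * b) • (s * s')) (c * s' + s * c') := by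
  have hss : ∀ j, min n m ≤ j → s j * s' j = 0 := fun j hj => by rw [hs j hj, zero_mul]
  simp only [hyperbolicBlocks, fromBlocks_multiply, Matrix.smul_mul, Matrix.mul_smul, smul_smul]
  simp (disch := intro j hj hb; first | omega | exact hss j (by omega)) only
    [rectDiagonal_mul_rectDiagonal, ← smul_add, rectDiagonal_add, smul_rectDiagonal]
  rw [mul_comm b a, add_comm (s * c'), mul_comm s c', mul_comm s s', add_comm ((a * b) • _)]

lemma hyperbolicBlocks_one (a b : K) :
    (hyperbolicBlocks a b 1 0 : Matrix (Fin n ⊕ Fin m) _ K) = 1 := by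
  simp [hyperbolicBlocks, rectDiagonal_self, ← fromBlocks_one]

lemma hasSum_hyperbolicBlocks [TopologicalSpace K] [IsTopologicalRing K] {ι : Type*}
    (a b : K) {c s : ι → ℕ → K} {C S : ℕ → K} (hc : HasSum c C) (hs : HasSum s S) :
    HasSum (fun k => (hyperbolicBlocks a b (c k) (s k) : Matrix (Fin n ⊕ Fin m) _ K))
      (hyperbolicBlocks a b C S) :=
  (hasSum_rectDiagonal hc).matrix_fromBlocks ((hasSum_rectDiagonal hs).const_smul a)
    ((hasSum_rectDiagonal hs).const_smul b) (hasSum_rectDiagonal hc)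

variable {a b : K} {t : ℕ → K}

lemma hyperbolicBlocks_zero_pow_even (hab : a * b = 1) (ht : ∀ j, min n m ≤ j → t j = 0)
    (k : ℕ) :
    (hyperbolicBlocks a b 0 t : Matrix (Fin n ⊕ Fin m) _ K) ^ (2 * k) =
      hyperbolicBlocks a b (t ^ (2 * k)) 0 := by
  induction k with
  | zero => simp [hyperbolicBlocks_one]
  | succ k ih =>
    rw [mul_add, mul_one, pow_add, ih, sq, hyperbolicBlocks_mul _ _ _ _ _ _ ht,
      hyperbolicBlocks_mul a b _ 0 _ _ (fun _ _ => rfl)]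
    simp [hab, pow_add, sq]

lemma hyperbolicBlocks_zero_pow_odd (hab : a * b = 1) (ht : ∀ j, min n m ≤ j → t j = 0)
    (k : ℕ) :
    (hyperbolicBlocks a b 0 t : Matrix (Fin n ⊕ Fin m) _ K) ^ (2 * k + 1) =
      hyperbolicBlocks a b 0 (t ^ (2 * k + 1)) := by
  rw [pow_succ, hyperbolicBlocks_zero_pow_even hab ht,
    hyperbolicBlocks_mul a b _ 0 _ _ (fun _ _ => rfl)]
  simp [pow_succ]

end HyperbolicBlocks

open Complex in
theorem exp_hyperbolicBlocks_zero {n m : ℕ} {a b : ℂ} {t : ℕ → ℂ} (hab : a * b = 1)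
    (ht : ∀ j, min n m ≤ j → t j = 0) :
    NormedSpace.exp (hyperbolicBlocks a b 0 t : Matrix (Fin n ⊕ Fin m) _ ℂ) =
      hyperbolicBlocks a b (fun j => cosh (t j)) (fun j => sinh (t j)) := by
  have heven : HasSum (fun k => ((2 * k).factorial : ℂ)⁻¹ • hyperbolicBlocks a b 0 t ^ (2 * k))
      (hyperbolicBlocks a b (fun j => cosh (t j)) 0 : Matrix (Fin n ⊕ Fin m) _ ℂ) := by
    simp_rw [hyperbolicBlocks_zero_pow_even hab ht, smul_hyperbolicBlocks, smul_zero]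
    refine hasSum_hyperbolicBlocks a b (Pi.hasSum.2 fun j => ?_) hasSum_zero
    simpa only [Pi.smul_apply, Pi.pow_apply, smul_eq_mul, inv_mul_eq_div] using hasSum_cosh (t j)
  have hodd : HasSum
      (fun k => ((2 * k + 1).factorial : ℂ)⁻¹ • hyperbolicBlocks a b 0 t ^ (2 * k + 1))
      (hyperbolicBlocks a b 0 (fun j => sinh (t j)) : Matrix (Fin n ⊕ Fin m) _ ℂ) := by
    simp_rw [hyperbolicBlocks_zero_pow_odd hab ht, smul_hyperbolicBlocks, smul_zero]
    refine hasSum_hyperbolicBlocks a b hasSum_zero (Pi.hasSum.2 fun j => ?_)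
    simpa only [Pi.smul_apply, Pi.pow_apply, smul_eq_mul, inv_mul_eq_div] using hasSum_sinh (t j)
  have hsum := HasSum.even_add_odd (f := fun k =>
    (k.factorial : ℂ)⁻¹ • (hyperbolicBlocks a b 0 t : Matrix (Fin n ⊕ Fin m) _ ℂ) ^ k) heven hodd
  rw [hyperbolicBlocks_add, add_zero, zero_add] at hsum
  rw [NormedSpace.exp_eq_tsum ℂ]
  exact hsum.tsum_eq

theorem fromBlocks_offDiag_mul_mul_conjTranspose {R l m : Type*} [CommRing R] [StarRing R]
    [Fintype l] [Fintype m] (c d : R) (A : Matrix l l R) (B : Matrix m m R) (S : Matrix m l R) :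
    fromBlocks 0 (c • (B * S * Aᴴ)ᴴ) (d • (B * S * Aᴴ)) 0 =
      fromBlocks A 0 0 B * fromBlocks 0 (c • Sᴴ) (d • S) 0 * (fromBlocks A 0 0 B)ᴴ := by
  simp [fromBlocks_conjTranspose, fromBlocks_multiply, conjTranspose_mul, Matrix.mul_assoc]

theorem fromBlocks_offDiag_rectDiagonal_eq_hyperbolicBlocks {m n : ℕ} (s : ℕ → ℝ) (r : ℝ)
    (e : ℂ) :
    fromBlocks 0 (starRingEnd ℂ (r * e) • (rectDiagonal m n fun j => (s j : ℂ))ᴴ)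
        ((r * e) • rectDiagonal m n fun j => (s j : ℂ)) 0 =
      hyperbolicBlocks (starRingEnd ℂ e) e 0 fun j => ((s j * r : ℝ) : ℂ) := by
  rw [hyperbolicBlocks, rectDiagonal_zero, rectDiagonal_zero, conjTranspose_rectDiagonal]
  simp only [smul_rectDiagonal]
  congr 1 <;> (congr 1; funext j; simp only [Pi.smul_apply, Pi.star_apply, smul_eq_mul, map_mul,
    Complex.star_def, Complex.conj_ofReal, Complex.ofReal_mul]; ring)

theorem fromBlocks_mem_unitaryGroup {R l m : Type*} [CommRing R] [StarRing R] [Fintype l]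
    [Fintype m] [DecidableEq l] [DecidableEq m] {A : Matrix l l R} {B : Matrix m m R}
    (hA : A ∈ unitaryGroup l R) (hB : B ∈ unitaryGroup m R) :
    fromBlocks A 0 0 B ∈ unitaryGroup (l ⊕ m) R := by
  rw [mem_unitaryGroup_iff, star_eq_conjTranspose, fromBlocks_conjTranspose, fromBlocks_multiply]
  simp [← star_eq_conjTranspose, mem_unitaryGroup_iff.1 hA, mem_unitaryGroup_iff.1 hB]

theorem exp_unitary_conj {𝔸 ι : Type*} [NormedCommRing 𝔸] [NormedAlgebra ℚ 𝔸] [CompleteSpace 𝔸]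
    [StarRing 𝔸] [Fintype ι] [DecidableEq ι] {U : Matrix ι ι 𝔸} (hU : U ∈ unitaryGroup ι 𝔸)
    (X : Matrix ι ι 𝔸) :
    NormedSpace.exp (U * X * Uᴴ) = U * NormedSpace.exp X * Uᴴ :=
  Matrix.exp_units_conj (Unitary.toUnits ⟨U, hU⟩) X

theorem stmt_9_general {m n : ℕ} (σ : ℕ → ℝ)
    (hσzero : ∀ j, min m n ≤ j → σ j = 0)
    (S : Matrix (Fin m) (Fin n) ℂ)
    (hS : ∀ i j, S i j = if (i : ℕ) = (j : ℕ) then ((σ (i : ℕ) : ℝ) : ℂ) else 0)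
    (A : Matrix (Fin n) (Fin n) ℂ) (hA : A ∈ Matrix.unitaryGroup (Fin n) ℂ)
    (B : Matrix (Fin m) (Fin m) ℂ) (hB : B ∈ Matrix.unitaryGroup (Fin m) ℂ)
    (W : Matrix (Fin m) (Fin n) ℂ) (hW : W = B * S * Aᴴ)
    (r θ : ℝ) (z : ℂ) (hz : z = (r : ℂ) * Complex.exp (θ * Complex.I)) :
    NormedSpace.exp (Matrix.fromBlocks 0 ((starRingEnd ℂ z) • Wᴴ) (z • W) 0) =
      Matrix.fromBlocks A 0 0 B *
        Matrix.fromBlocks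
          (Matrix.diagonal fun j : Fin n => ((Real.cosh (σ (j : ℕ) * r) : ℝ) : ℂ))
          (Matrix.of fun (j : Fin n) (i : Fin m) =>
            if (j : ℕ) = (i : ℕ) then
              Complex.exp (-(θ * Complex.I)) * ((Real.sinh (σ (j : ℕ) * r) : ℝ) : ℂ)
            else 0)
          (Matrix.of fun (i : Fin m) (j : Fin n) =>
            if (i : ℕ) = (j : ℕ) then
              Complex.exp (θ * Complex.I) * ((Real.sinh (σ (i : ℕ) * r) : ℝ) : ℂ)
            else 0)
          (Matrix.diagonal fun i : Fin m => ((Real.cosh (σ (i : ℕ) * r) : ℝ) : ℂ)) *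
        (Matrix.fromBlocks A 0 0 B)ᴴ := by
  have hconj : starRingEnd ℂ (Complex.exp (θ * Complex.I)) = Complex.exp (-(θ * Complex.I)) := by
    rw [← Complex.exp_conj, map_mul, Complex.conj_ofReal, Complex.conj_I, mul_neg]
  have hunit : starRingEnd ℂ (Complex.exp (θ * Complex.I)) * Complex.exp (θ * Complex.I) = 1 := by
    rw [hconj, ← Complex.exp_add, neg_add_cancel, Complex.exp_zero]
  have hS : S = rectDiagonal m n fun j => (σ j : ℂ) := by
    ext i j
    simp [hS]
  have hσr : ∀ j, min n m ≤ j → ((σ j * r : ℝ) : ℂ) = 0 := fun j hj => by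
    simp [hσzero j (by omega)]
  rw [hW, fromBlocks_offDiag_mul_mul_conjTranspose, hz, hS,
    fromBlocks_offDiag_rectDiagonal_eq_hyperbolicBlocks,
    exp_unitary_conj (fromBlocks_mem_unitaryGroup hA hB), exp_hyperbolicBlocks_zero hunit hσr,
    hconj]
  simp only [hyperbolicBlocks, rectDiagonal_self, smul_rectDiagonal, ← Complex.ofReal_cosh,
    ← Complex.ofReal_sinh]
  rfl

theorem stmt_9 {m n : ℕ} (σ : ℕ → ℝ)
    (hσnonneg : ∀ j, 0 ≤ σ j)
    (hσanti : ∀ j k : ℕ, j ≤ k → σ k ≤ σ j)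
    (hσzero : ∀ j, min m n ≤ j → σ j = 0)
    (S : Matrix (Fin m) (Fin n) ℂ)
    (hS : ∀ i j, S i j = if (i : ℕ) = (j : ℕ) then ((σ (i : ℕ) : ℝ) : ℂ) else 0)
    (A : Matrix (Fin n) (Fin n) ℂ) (hA : A ∈ Matrix.unitaryGroup (Fin n) ℂ)
    (B : Matrix (Fin m) (Fin m) ℂ) (hB : B ∈ Matrix.unitaryGroup (Fin m) ℂ)
    (W : Matrix (Fin m) (Fin n) ℂ) (hW : W = B * S * Aᴴ)
    (r θ : ℝ) (hr : 0 ≤ r) (z : ℂ) (hz : z = (r : ℂ) * Complex.exp (θ * Complex.I)) :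
    NormedSpace.exp (Matrix.fromBlocks 0 ((starRingEnd ℂ z) • Wᴴ) (z • W) 0) =
      Matrix.fromBlocks A 0 0 B *
        Matrix.fromBlocks
          (Matrix.diagonal fun j : Fin n => ((Real.cosh (σ (j : ℕ) * r) : ℝ) : ℂ))
          (Matrix.of fun (j : Fin n) (i : Fin m) =>
            if (j : ℕ) = (i : ℕ) then
              Complex.exp (-(θ * Complex.I)) * ((Real.sinh (σ (j : ℕ) * r) : ℝ) : ℂ)
            else 0)
          (Matrix.of fun (i : Fin m) (j : Fin n) =>
            if (i : ℕ) = (j : ℕ) then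
              Complex.exp (θ * Complex.I) * ((Real.sinh (σ (i : ℕ) * r) : ℝ) : ℂ)
            else 0)
          (Matrix.diagonal fun i : Fin m => ((Real.cosh (σ (i : ℕ) * r) : ℝ) : ℂ)) *
        (Matrix.fromBlocks A 0 0 B)ᴴ :=
  stmt_9_general σ hσzero S hS A hA B hB W hW r θ z hz
end

section
/- Let W ∈ M_{m×n}(ℂ) with rank W = q and let σ_1,...,σ_q > 0 be the positive square roots of the nonzero eigenvalues of W*W. The map z ↦ exp(ẑW) from ℂ to U(n,m) is injective, where ẑW is the block matrix with top-right block z̄W* and bottom-left block zW. -/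
/-! The generator `ẑW` is Hermitian, and the exponential is injective on Hermitian matrices
because the continuous-functional-calculus logarithm inverts it there. The bottom-left block
`z • W` of the generator then determines `z`, since `W ≠ 0`. -/

open Matrix NormedSpace

theorem NormedSpace.exp_injOn_isSelfAdjoint {A : Type*} [NormedRing A] [StarRing A]
    [NormedAlgebra ℝ A] [ContinuousFunctionalCalculus ℝ A IsSelfAdjoint] :
    Set.InjOn (exp : A → A) {a | IsSelfAdjoint a} := fun a ha b hb h => by
  rw [← CFC.log_exp a ha, h, CFC.log_exp b hb]

theorem Matrix.exp_injOn_isHermitian {k : Type*} [Fintype k] [DecidableEq k] :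
    Set.InjOn (exp : Matrix k k ℂ → Matrix k k ℂ) {A | A.IsHermitian} := by
  let _ : NormedRing (Matrix k k ℂ) := Matrix.instL2OpNormedRing
  let _ : NormedAlgebra ℂ (Matrix k k ℂ) := Matrix.instL2OpNormedAlgebra
  let _ : NormedAlgebra ℝ (Matrix k k ℂ) := NormedAlgebra.restrictScalars ℝ ℂ (Matrix k k ℂ)
  exact NormedSpace.exp_injOn_isSelfAdjoint

theorem Matrix.isHermitian_fromBlocks_zero_smul_conjTranspose {m n : Type*}
    (W : Matrix m n ℂ) (z : ℂ) :
    (fromBlocks 0 (starRingEnd ℂ z • Wᴴ) (z • W) 0).IsHermitian := by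
  simp [IsHermitian, fromBlocks_conjTranspose, conjTranspose_smul]

theorem stmt_10 {m n : ℕ} (W : Matrix (Fin m) (Fin n) ℂ) (hW : W ≠ 0) :
    Function.Injective (fun z : ℂ =>
      NormedSpace.exp
        (Matrix.fromBlocks 0 ((starRingEnd ℂ z) • Wᴴ) (z • W) 0)) := by
  intro z w h
  have generators_eq := Matrix.exp_injOn_isHermitian
    (isHermitian_fromBlocks_zero_smul_conjTranspose W z)
    (isHermitian_fromBlocks_zero_smul_conjTranspose W w) h
  have lower_blocks_eq : z • W = w • W := by
    simpa only [toBlocks_fromBlocks₂₁] using congrArg toBlocks₂₁ generators_eq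
  exact smul_left_injective ℂ hW lower_blocks_eq
end
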